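/- F_min fails the triangle inequality for the angle metric: there exist density matrices ρ, σ, τ on ℂ² with arccos F_min(ρ,σ) > arccos F_min(ρ,τ) + arccos F_min(τ,σ). Concretely, for 0 < θ < π/2, take pure states ψ = (cos(θ/2), sin(θ/2)), φ = (cos(θ/2), −sin(θ/2)), and τ = diag(cos(θ/2), sin(θ/2))/(cos(θ/2)+sin(θ/2)); then F_min(ψ,φ)=0 while F_min(ψ,τ)=F_min(φ,τ)=1/(cos(θ/2)+sin(θ/2)), and the inequality holds for small θ. -/

import Mathlib

open Matrix BigOperators
open scoped ComplexOrder Classical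

noncomputable def msqrt {n : Type*} [Fintype n] [DecidableEq n]
    (A : Matrix n n ℂ) : Matrix n n ℂ :=
  if h : A.PosSemidef then (h.1.eigenvectorUnitary : Matrix n n ℂ) *
    diagonal ((↑) ∘ Real.sqrt ∘ h.1.eigenvalues) * star (h.1.eigenvectorUnitary : Matrix n n ℂ)
  else 0

noncomputable def gm {n : Type*} [Fintype n] [DecidableEq n]
    (A B : Matrix n n ℂ) : Matrix n n ℂ :=
  msqrt A * msqrt ((msqrt A)⁻¹ * B * (msqrt A)⁻¹) * msqrt A

def IsDensity {n : Type*} [Fintype n] (ρ : Matrix n n ℂ) : Prop :=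
  ρ.PosSemidef ∧ ρ.trace = 1

structure IsReverseTest {d m : ℕ} (ρ σ : Matrix (Fin d) (Fin d) ℂ)
    (R : Fin m → Matrix (Fin d) (Fin d) ℂ) (p q : Fin m → ℝ) : Prop where
  states : ∀ x, IsDensity (R x)
  p_nonneg : ∀ x, 0 ≤ p x
  q_nonneg : ∀ x, 0 ≤ q x
  p_sum : ∑ x, p x = 1
  q_sum : ∑ x, q x = 1
  rho_eq : ∑ x, (p x : ℂ) • R x = ρ
  sigma_eq : ∑ x, (q x : ℂ) • R x = σ

noncomputable def Fmin {d : ℕ} (ρ σ : Matrix (Fin d) (Fin d) ℂ) : ℝ :=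
  sSup {r : ℝ | ∃ (m : ℕ) (R : Fin m → Matrix (Fin d) (Fin d) ℂ) (p q : Fin m → ℝ),
    IsReverseTest ρ σ R p q ∧ r = ∑ x, Real.sqrt (p x * q x)}

noncomputable def Dmax {d : ℕ} (ρ σ : Matrix (Fin d) (Fin d) ℂ) : ℝ :=
  sInf {r : ℝ | ∃ (m : ℕ) (R : Fin m → Matrix (Fin d) (Fin d) ℂ) (p q : Fin m → ℝ),
    IsReverseTest ρ σ R p q ∧ r = (∑ x, |p x - q x|) / 2}

noncomputable def choiMatrix {d e : ℕ}
    (Λ : Matrix (Fin d) (Fin d) ℂ →ₗ[ℂ] Matrix (Fin e) (Fin e) ℂ) :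
    Matrix (Fin d × Fin e) (Fin d × Fin e) ℂ :=
  Matrix.of fun pr qr => Λ (Matrix.single pr.1 qr.1 1) pr.2 qr.2

def IsCPTP {d e : ℕ}
    (Λ : Matrix (Fin d) (Fin d) ℂ →ₗ[ℂ] Matrix (Fin e) (Fin e) ℂ) : Prop :=
  (choiMatrix Λ).PosSemidef ∧ ∀ A, (Λ A).trace = A.trace

noncomputable def mcfc {n : Type*} [Fintype n] [DecidableEq n]
    (f : ℝ → ℝ) (A : Matrix n n ℂ) : Matrix n n ℂ :=
  if h : A.IsHermitian then h.cfc f else 0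

def IsOperatorMonotoneOnNonneg (f : ℝ → ℝ) : Prop :=
  ∀ (d : ℕ) (A B : Matrix (Fin d) (Fin d) ℂ), A.PosSemidef → B.PosSemidef →
    (B - A).PosSemidef → (mcfc f B - mcfc f A).PosSemidef

noncomputable def traceNorm {n : Type*} [Fintype n] [DecidableEq n]
    (A : Matrix n n ℂ) : ℝ :=
  ((msqrt (Aᴴ * A)).trace).re

/-!
Take cos(θ/2) = 4/5: then ψ and φ are the pure states along (4, 3) and (4, -3), and
τ = diag(4/7, 3/7). Since τ = (25/49) ψ + (24/49) |−⟩⟨−| = (25/49) φ + (24/49) |+⟩⟨+|, a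
two-outcome reverse test gives F_min(ψ, τ) ≥ 5/7 and F_min(τ, φ) ≥ 5/7, so the right-hand side
is at most 2 arccos(5/7) < π/2. In a reverse test of ψ and φ, an outcome state weighted by both
p and q must annihilate ker ψ ⊔ ker φ = ℂ², which is impossible for a state; hence
F_min(ψ, φ) = 0 and the left-hand side is arccos 0 = π/2.
-/

namespace IsReverseTest

variable {d m : ℕ} {ρ σ : Matrix (Fin d) (Fin d) ℂ} {R : Fin m → Matrix (Fin d) (Fin d) ℂ}
  {p q : Fin m → ℝ}

theorem symm (h : IsReverseTest ρ σ R p q) : IsReverseTest σ ρ R q p :=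
  ⟨h.states, h.q_nonneg, h.p_nonneg, h.q_sum, h.p_sum, h.sigma_eq, h.rho_eq⟩

theorem sum_sqrt_mul_le_one (h : IsReverseTest ρ σ R p q) : ∑ x, √(p x * q x) ≤ 1 :=
  calc ∑ x, √(p x * q x) ≤ ∑ x, (p x + q x) / 2 := by
        refine Finset.sum_le_sum fun x _ => Real.sqrt_le_iff.2 ⟨?_, ?_⟩
        · linarith [h.p_nonneg x, h.q_nonneg x]
        · nlinarith [sq_nonneg (p x - q x)]
    _ = 1 := by rw [← Finset.sum_div, Finset.sum_add_distrib, h.p_sum, h.q_sum]; norm_num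

theorem sum_sqrt_mul_le_Fmin (h : IsReverseTest ρ σ R p q) : ∑ x, √(p x * q x) ≤ Fmin ρ σ :=
  le_csSup ⟨1, by rintro _ ⟨m, R, p, q, h, rfl⟩; exact h.sum_sqrt_mul_le_one⟩ ⟨m, R, p, q, h, rfl⟩

end IsReverseTest

theorem Fmin_nonneg {d : ℕ} (ρ σ : Matrix (Fin d) (Fin d) ℂ) : 0 ≤ Fmin ρ σ :=
  Real.sSup_nonneg <| by rintro _ ⟨m, R, p, q, -, rfl⟩; positivity

theorem Fmin_comm {d : ℕ} (ρ σ : Matrix (Fin d) (Fin d) ℂ) : Fmin ρ σ = Fmin σ ρ := by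
  unfold Fmin
  congr 1
  ext r
  constructor <;> rintro ⟨m, R, p, q, h, rfl⟩ <;> exact ⟨m, R, q, p, h.symm, by simp [mul_comm]⟩

theorem IsDensity.mix {n : Type*} [Fintype n] {ρ σ : Matrix n n ℂ} (hρ : IsDensity ρ)
    (hσ : IsDensity σ) {t : ℝ} (ht₀ : 0 ≤ t) (ht₁ : t ≤ 1) : IsDensity (t • ρ + (1 - t) • σ) :=
  ⟨(hρ.1.smul ht₀).add (hσ.1.smul (sub_nonneg.2 ht₁)), by simp [trace_smul, hρ.2, hσ.2]⟩

theorem isReverseTest_mix {d : ℕ} {ρ σ : Matrix (Fin d) (Fin d) ℂ} (hρ : IsDensity ρ)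
    (hσ : IsDensity σ) {t : ℝ} (ht₀ : 0 ≤ t) (ht₁ : t ≤ 1) :
    IsReverseTest ρ (t • ρ + (1 - t) • σ) ![ρ, σ] ![1, 0] ![t, 1 - t] where
  states x := by fin_cases x <;> assumption
  p_nonneg x := by fin_cases x <;> simp
  q_nonneg x := by fin_cases x <;> simp [ht₀, ht₁]
  p_sum := by simp
  q_sum := by simp
  rho_eq := by simp
  sigma_eq := by simp

theorem sqrt_le_Fmin_mix {d : ℕ} {ρ σ : Matrix (Fin d) (Fin d) ℂ} (hρ : IsDensity ρ)
    (hσ : IsDensity σ) {t : ℝ} (ht₀ : 0 ≤ t) (ht₁ : t ≤ 1) :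
    √t ≤ Fmin ρ (t • ρ + (1 - t) • σ) := by
  simpa using (isReverseTest_mix hρ hσ ht₀ ht₁).sum_sqrt_mul_le_Fmin

theorem ker_toLin'_le_of_sum_smul {ι n : Type*} [Fintype ι] [Fintype n] [DecidableEq n]
    {R : ι → Matrix n n ℂ} {p : ι → ℝ} (hR : ∀ x, (R x).PosSemidef) (hp : ∀ x, 0 ≤ p x)
    {x : ι} (hx : p x ≠ 0) :
    LinearMap.ker (toLin' (∑ y, (p y : ℂ) • R y)) ≤ LinearMap.ker (toLin' (R x)) := by
  intro w hw
  rw [LinearMap.mem_ker, toLin'_apply] at hw ⊢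
  have hform : ∑ y, (p y : ℂ) * (star w ⬝ᵥ R y *ᵥ w) = 0 := by
    simpa [sum_mulVec, dotProduct_sum, smul_mulVec, dotProduct_smul] using
      congrArg (star w ⬝ᵥ ·) hw
  have hterm := (Finset.sum_eq_zero_iff_of_nonneg fun y _ =>
    mul_nonneg (by exact_mod_cast hp y) ((hR y).dotProduct_mulVec_nonneg w)).1 hform x
    (Finset.mem_univ x)
  exact ((hR x).dotProduct_mulVec_zero_iff w).1
    ((mul_eq_zero.1 hterm).resolve_left (by exact_mod_cast hx))

theorem Fmin_eq_zero_of_ker_sup_eq_top {d : ℕ} {ρ σ : Matrix (Fin d) (Fin d) ℂ}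
    (h : LinearMap.ker (toLin' ρ) ⊔ LinearMap.ker (toLin' σ) = ⊤) : Fmin ρ σ = 0 := by
  refine le_antisymm (Real.sSup_nonpos ?_) (Fmin_nonneg ρ σ)
  rintro _ ⟨m, R, p, q, hT, rfl⟩
  refine (Finset.sum_eq_zero fun x _ => ?_).le
  suffices p x = 0 ∨ q x = 0 by rcases this with h0 | h0 <;> simp [h0]
  by_contra! hpq
  have hR := fun y => (hT.states y).1
  have hker : LinearMap.ker (toLin' (R x)) = ⊤ := top_le_iff.1 <| h ▸ sup_le
    (hT.rho_eq ▸ ker_toLin'_le_of_sum_smul hR hT.p_nonneg hpq.1)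
    (hT.sigma_eq ▸ ker_toLin'_le_of_sum_smul hR hT.q_nonneg hpq.2)
  have hzero : R x = 0 := by simpa using LinearMap.ker_eq_top.1 hker
  simpa [hzero] using (hT.states x).2

noncomputable def pureState {n : Type*} [Fintype n] (v : n → ℂ) : Matrix n n ℂ :=
  (v ⬝ᵥ star v)⁻¹ • vecMulVec v (star v)

theorem pureState_apply {n : Type*} [Fintype n] (v : n → ℂ) (i j : n) :
    pureState v i j = (v ⬝ᵥ star v)⁻¹ * (v i * star (v j)) := rfl

theorem isDensity_pureState {n : Type*} [Fintype n] {v : n → ℂ} (hv : v ≠ 0) :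
    IsDensity (pureState v) := by
  refine ⟨(posSemidef_vecMulVec_self_star v).smul
    (inv_nonneg.2 (dotProduct_self_star_nonneg v)), ?_⟩
  rw [pureState, trace_smul, trace_vecMulVec, smul_eq_mul, inv_mul_cancel₀]
  simpa using hv

theorem pureState_mulVec_eq_zero {n : Type*} [Fintype n] {v w : n → ℂ} (h : star v ⬝ᵥ w = 0) :
    pureState v *ᵥ w = 0 := by
  simp [pureState, smul_mulVec, vecMulVec_mulVec, h]

theorem diagonal_eq_mix_pureState_left :
    diagonal ![(4 / 7 : ℂ), 3 / 7] =
      (25 / 49 : ℝ) • pureState ![4, 3] + (1 - 25 / 49 : ℝ) • pureState ![1, -1] := by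
  ext i j
  fin_cases i <;> fin_cases j <;>
    simp [pureState_apply, dotProduct, Fin.sum_univ_two, map_ofNat] <;> norm_num

theorem diagonal_eq_mix_pureState_right :
    diagonal ![(4 / 7 : ℂ), 3 / 7] =
      (25 / 49 : ℝ) • pureState ![4, -3] + (1 - 25 / 49 : ℝ) • pureState ![1, 1] := by
  ext i j
  fin_cases i <;> fin_cases j <;>
    simp [pureState_apply, dotProduct, Fin.sum_univ_two, map_ofNat] <;> norm_num

theorem ker_pureState_sup_eq_top :
    LinearMap.ker (toLin' (pureState ![(4 : ℂ), 3])) ⊔ LinearMap.ker (toLin' (pureState ![4, -3]))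
      = ⊤ := by
  refine Submodule.eq_top_iff'.2 fun v => Submodule.mem_sup.2
    ⟨((4 * v 0 - 3 * v 1) / 24) • ![3, -4], Submodule.smul_mem _ _ ?_,
      ((4 * v 0 + 3 * v 1) / 24) • ![3, 4], Submodule.smul_mem _ _ ?_, ?_⟩
  · rw [LinearMap.mem_ker, toLin'_apply]
    exact pureState_mulVec_eq_zero (by simp [dotProduct, map_ofNat]; norm_num)
  · rw [LinearMap.mem_ker, toLin'_apply]
    exact pureState_mulVec_eq_zero (by simp [dotProduct, map_ofNat]; norm_num)
  · ext i
    fin_cases i <;> simp <;> ring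

theorem arccos_five_div_seven_lt : Real.arccos (5 / 7) < Real.pi / 4 := by
  have h : √2 / 2 < 5 / 7 := by
    nlinarith [Real.sq_sqrt (show (0 : ℝ) ≤ 2 by norm_num), Real.sqrt_nonneg 2]
  exact (Real.arccos_lt_arccos (by linarith [Real.sqrt_nonneg 2]) h (by norm_num)).trans_le
    (Real.arccos_le_pi_div_four.2 le_rfl)

theorem stmt11 : ∃ ρ σ τ : Matrix (Fin 2) (Fin 2) ℂ,
    IsDensity ρ ∧ IsDensity σ ∧ IsDensity τ ∧
    Real.arccos (Fmin ρ τ) + Real.arccos (Fmin τ σ) < Real.arccos (Fmin ρ σ) := by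
  have hψ : IsDensity (pureState ![(4 : ℂ), 3]) := isDensity_pureState (by simp)
  have hφ : IsDensity (pureState ![(4 : ℂ), -3]) := isDensity_pureState (by simp)
  have hM : IsDensity (pureState ![(1 : ℂ), -1]) := isDensity_pureState (by simp)
  have hN : IsDensity (pureState ![(1 : ℂ), 1]) := isDensity_pureState (by simp)
  have h₀ : (0 : ℝ) ≤ 25 / 49 := by norm_num
  have h₁ : (25 / 49 : ℝ) ≤ 1 := by norm_num
  have h57 : √(25 / 49 : ℝ) = 5 / 7 := by
    rw [show (25 / 49 : ℝ) = (5 / 7) ^ 2 by norm_num, Real.sqrt_sq (by norm_num)]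
  have hψτ := sqrt_le_Fmin_mix hψ hM h₀ h₁
  have hφτ := sqrt_le_Fmin_mix hφ hN h₀ h₁
  rw [← diagonal_eq_mix_pureState_left, h57] at hψτ
  rw [← diagonal_eq_mix_pureState_right, h57, Fmin_comm] at hφτ
  refine ⟨_, _, _, hψ, hφ, diagonal_eq_mix_pureState_left ▸ hψ.mix hM h₀ h₁, ?_⟩
  rw [Fmin_eq_zero_of_ker_sup_eq_top ker_pureState_sup_eq_top, Real.arccos_zero]
  linarith [Real.arccos_le_arccos hψτ, Real.arccos_le_arccos hφτ, arccos_five_div_seven_lt]
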